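/- Let V be a discrete vector field on a simplicial complex K, and for a, b ∈ ℝᵏ let K(a) be the sublevel complex of an mdm function f whose gradient is V. Then for every a ∈ ℝᵏ, the sublevel complex K(a) is V-compatible: for every simplex σ, σ⁻ ∈ K(a) if and only if σ⁺ ∈ K(a). -/

import Mathlib

open Finset

variable {α : Type*} [DecidableEq α]

/-- `K` is a finite simplicial complex: a finite collection of nonempty finite sets
closed under taking nonempty subsets. -/
def IsComplex (K : Finset (Finset α)) : Prop :=
  ∀ σ ∈ K, σ.Nonempty ∧ ∀ τ ⊆ σ, τ.Nonempty → τ ∈ K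

/-- `V` is a discrete vector field on `K`. -/
def IsDVF (K : Finset (Finset α)) (V : Finset α → Option (Finset α)) : Prop :=
  (∀ σ τ, V σ = some τ → σ ∈ K ∧ τ ∈ K ∧ (τ = σ ∨ (σ ⊆ τ ∧ τ.card = σ.card + 1))) ∧
  (∀ σ σ' τ, V σ = some τ → V σ' = some τ → σ = σ') ∧
  (∀ σ ∈ K, (V σ).isSome = true ∨ ∃ τ, V τ = some σ) ∧
  (∀ σ, (V σ).isSome = true → (∃ τ, V τ = some σ) → V σ = some σ) ∧
  (∀ σ, σ ∉ K → V σ = none)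

/-- The flow `Π_V` associated to a discrete vector field `V`. -/
def flow (V : Finset α → Option (Finset α)) (σ : Finset α) : Set (Finset α) :=
  match V σ with
  | some β => if β = σ then {τ | τ.Nonempty ∧ τ ⊆ σ} else {β}
  | none => {τ | τ.Nonempty ∧ τ ⊆ σ ∧ τ ≠ σ ∧ V τ ≠ some σ}

/-- `σ →_V τ`: there is a nontrivial solution of the flow `Π_V` from `σ` to `τ`. -/
def Connects (V : Finset α → Option (Finset α)) (σ τ : Finset α) : Prop :=
  ∃ (n : ℕ) (ρ : ℕ → Finset α), 1 ≤ n ∧ ρ 0 = σ ∧ ρ n = τ ∧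
    ∀ i < n, ρ (i + 1) ∈ flow V (ρ i)

/-- `H_f(σ)`: the cofacets `β ⊃ σ` with `f β ≼ f σ`. -/
def Hset {β : Type*} [Preorder β] (K : Finset (Finset α)) (f : Finset α → β)
    (σ : Finset α) : Set (Finset α) :=
  {τ | τ ∈ K ∧ σ ⊆ τ ∧ τ.card = σ.card + 1 ∧ f τ ≤ f σ}

/-- `T_f(σ)`: the facets `α ⊂ σ` with `f α ≽ f σ`. -/
def Tset {β : Type*} [Preorder β] (K : Finset (Finset α)) (f : Finset α → β)
    (σ : Finset α) : Set (Finset α) :=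
  {τ | τ ∈ K ∧ τ ⊆ σ ∧ σ.card = τ.card + 1 ∧ f σ ≤ f τ}

/-- `f` is a multidimensional discrete Morse function: `|H_f(σ)| ≤ 1`, `|T_f(σ)| ≤ 1`,
cofacets outside `H_f(σ)` have strictly larger value, and facets outside `T_f(σ)`
have strictly smaller value (in the partial order of the codomain). -/
def IsMdm {β : Type*} [Preorder β] (K : Finset (Finset α)) (f : Finset α → β) : Prop :=
  ∀ σ ∈ K,
    (Hset K f σ).Subsingleton ∧ (Tset K f σ).Subsingleton ∧
    (∀ τ ∈ K, σ ⊆ τ → τ.card = σ.card + 1 → τ ∉ Hset K f σ → f σ ≤ f τ ∧ f σ ≠ f τ) ∧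
    (∀ τ ∈ K, τ ⊆ σ → σ.card = τ.card + 1 → τ ∉ Tset K f σ → f τ ≤ f σ ∧ f τ ≠ f σ)

/-- `V` is the gradient vector field of `f`: `dom V = {σ : T_f(σ) = ∅}`, with
`V σ = σ` if `H_f(σ) = ∅` and `V σ = β` if `H_f(σ) = {β}`. -/
def IsGrad {β : Type*} [Preorder β] (K : Finset (Finset α)) (f : Finset α → β)
    (V : Finset α → Option (Finset α)) : Prop :=
  (∀ σ, σ ∉ K → V σ = none) ∧
  ∀ σ ∈ K,
    (Tset K f σ ≠ ∅ → V σ = none) ∧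
    (Tset K f σ = ∅ →
      (Hset K f σ = ∅ → V σ = some σ) ∧ ∀ τ, Hset K f σ = {τ} → V σ = some τ)

/-- `σ` is a critical simplex of `f`. -/
def IsCritical {β : Type*} [Preorder β] (K : Finset (Finset α)) (f : Finset α → β)
    (σ : Finset α) : Prop :=
  Hset K f σ = ∅ ∧ Tset K f σ = ∅

open Classical in
/-- The sublevel complex `K(a)`. -/
noncomputable def sublevel {k : ℕ} (K : Finset (Finset α)) (f : Finset α → Fin k → ℝ)
    (a : Fin k → ℝ) : Finset (Finset α) :=
  K.filter fun σ => ∃ τ ∈ K, σ ⊆ τ ∧ f τ ≤ a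

/-- `σ⁺ = V σ` if `σ ∈ dom V`, else `σ`. -/
def vplus (V : Finset α → Option (Finset α)) (σ : Finset α) : Finset α := (V σ).getD σ

open Classical in
/-- `σ⁻ = σ` if `σ ∈ dom V`, else `V⁻¹ σ` (when it exists). -/
noncomputable def vminus (V : Finset α → Option (Finset α)) (σ : Finset α) : Finset α :=
  if (V σ).isSome = true then σ
  else if h : ∃ τ, V τ = some σ then h.choose else σ

lemma Hset_singleton_of_V {k : ℕ} {K : Finset (Finset α)} {f : Finset α → Fin k → ℝ}
    {V : Finset α → Option (Finset α)} (hf : IsMdm K f) (hV : IsGrad K f V)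
    {σ τ : Finset α} (hσ : σ ∈ K) (hVσ : V σ = some τ) (hne : τ ≠ σ) :
    Hset K f σ = {τ} := by
  obtain ⟨hT, hH⟩ := hV.2 σ hσ
  have hTe : Tset K f σ = ∅ := by
    by_contra h
    rw [hT h] at hVσ
    exact nomatch hVσ
  obtain ⟨hHe, hHs⟩ := hH hTe
  have hHne : Hset K f σ ≠ ∅ := by
    intro h
    rw [hHe h] at hVσ
    exact hne (Option.some.inj hVσ).symm
  obtain ⟨η, hη⟩ := Set.nonempty_iff_ne_empty.mpr hHne
  have heq : Hset K f σ = {η} := (hf σ hσ).1.eq_singleton_of_mem hη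
  have hVη := hHs η heq
  have : η = τ := Option.some.inj (hVη.symm.trans hVσ)
  rw [heq, this]

lemma sublevel_step {k : ℕ} {K : Finset (Finset α)} {f : Finset α → Fin k → ℝ}
    (hK : IsComplex K) (hf : IsMdm K f) (a : Fin k → ℝ) :
    ∀ n (ρ σ τ : Finset α), ρ.card ≤ n → ρ ∈ K → σ ∈ K → σ ⊆ ρ →
      Hset K f σ = {τ} → f ρ ≤ a → ∃ ρ' ∈ K, τ ⊆ ρ' ∧ f ρ' ≤ a := by
  intro n
  induction n with
  | zero =>
    intro ρ σ τ hn hρ hσ hσρ _ _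
    have h1 := Finset.card_pos.mpr (hK σ hσ).1
    have h2 := Finset.card_le_card hσρ
    omega
  | succ n ih =>
    intro ρ σ τ hn hρ hσ hσρ hH hfa
    have hτmem : τ ∈ Hset K f σ := by rw [hH]; exact rfl
    obtain ⟨hτK, hστ, hcards, hfτσ⟩ := hτmem
    rcases le_or_gt ρ.card σ.card with hge | hlt
    · have heq : σ = ρ := Finset.eq_of_subset_of_card_le hσρ hge
      exact ⟨τ, hτK, subset_rfl, le_trans hfτσ (heq ▸ hfa)⟩
    · have step : ∀ z ∈ ρ \ σ, ρ.erase z ∉ Tset K f ρ →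
          ∃ ρ' ∈ K, τ ⊆ ρ' ∧ f ρ' ≤ a := by
        intro z hz hzT
        obtain ⟨hzρ, hzσ⟩ := Finset.mem_sdiff.mp hz
        have hsub : ρ.erase z ⊆ ρ := Finset.erase_subset _ _
        have hσα : σ ⊆ ρ.erase z := Finset.subset_erase.mpr ⟨hσρ, hzσ⟩
        have hαK : ρ.erase z ∈ K :=
          (hK ρ hρ).2 _ hsub ((hK σ hσ).1.mono hσα)
        have hcard : ρ.card = (ρ.erase z).card + 1 := by
          rw [Finset.card_erase_of_mem hzρ]
          have : 1 ≤ ρ.card := Finset.card_pos.mpr ⟨z, hzρ⟩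
          omega
        have hfα : f (ρ.erase z) ≤ f ρ :=
          ((hf ρ hρ).2.2.2 _ hαK hsub hcard hzT).1
        exact ih (ρ.erase z) σ τ (by omega) hαK hσ hσα hH (le_trans hfα hfa)
      rcases eq_or_lt_of_le (Nat.succ_le_of_lt hlt) with h1 | h2
      · -- ρ is a cofacet of σ
        by_cases hHρ : ρ ∈ Hset K f σ
        · rw [hH] at hHρ
          have hρτ : ρ = τ := Set.mem_singleton_iff.mp hHρ
          exact ⟨ρ, hρ, by rw [hρτ], hfa⟩
        · have hfσρ := ((hf σ hσ).2.2.1 ρ hρ hσρ h1.symm hHρ).1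
          exact ⟨τ, hτK, subset_rfl, le_trans hfτσ (le_trans hfσρ hfa)⟩
      · -- there are at least two facets of ρ containing σ
        have hcd : 1 < (ρ \ σ).card := by
          rw [Finset.card_sdiff_of_subset hσρ]; omega
        obtain ⟨x, hx, y, hy, hxy⟩ := Finset.one_lt_card.mp hcd
        have hxρ := (Finset.mem_sdiff.mp hx).1
        have hyρ := (Finset.mem_sdiff.mp hy).1
        by_cases ht1 : ρ.erase x ∈ Tset K f ρ
        · have ht2 : ρ.erase y ∉ Tset K f ρ := by
            intro h2
            have heq := (hf ρ hρ).2.1 ht1 h2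
            have hxmem : x ∈ ρ.erase y := Finset.mem_erase.mpr ⟨hxy, hxρ⟩
            rw [← heq] at hxmem
            exact Finset.notMem_erase x ρ hxmem
          exact step y hy ht2
        · exact step x hx ht1

/-- For the gradient `V` of an mdm function `f`, every sublevel complex `K(a)` is
`V`-compatible: `σ⁻ ∈ K(a) ↔ σ⁺ ∈ K(a)` for every simplex `σ`. -/
theorem stmt19 {k : ℕ} (K : Finset (Finset α)) (f : Finset α → Fin k → ℝ)
    (V : Finset α → Option (Finset α)) (hK : IsComplex K)
    (hf : IsMdm K f) (hV : IsGrad K f V) (a : Fin k → ℝ)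
    (σ : Finset α) (hσ : σ ∈ K) :
    vminus V σ ∈ sublevel K f a ↔ vplus V σ ∈ sublevel K f a := by
  classical
  have hmemsub : ∀ s, s ∈ sublevel K f a ↔ s ∈ K ∧ ∃ τ ∈ K, s ⊆ τ ∧ f τ ≤ a := by
    intro s; simp [sublevel, Finset.mem_filter]
  have core : ∀ σ' τ', σ' ∈ K → V σ' = some τ' → τ' ≠ σ' →
      (σ' ∈ sublevel K f a ↔ τ' ∈ sublevel K f a) := by
    intro σ' τ' hσ' hVσ' hne
    have hH := Hset_singleton_of_V hf hV hσ' hVσ' hne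
    have hτmem : τ' ∈ Hset K f σ' := by rw [hH]; exact rfl
    obtain ⟨hτK, hστ, _, _⟩ := hτmem
    constructor
    · intro h
      rw [hmemsub] at h
      obtain ⟨_, ρ, hρK, hσρ, hfa⟩ := h
      obtain ⟨ρ', hρ'K, hτρ', hfρ'⟩ :=
        sublevel_step hK hf a ρ.card ρ σ' τ' le_rfl hρK hσ' hσρ hH hfa
      exact (hmemsub τ').mpr ⟨hτK, ρ', hρ'K, hτρ', hfρ'⟩
    · intro h
      rw [hmemsub] at h ⊢
      obtain ⟨_, ρ, hρK, hτρ, hfa⟩ := h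
      exact ⟨hσ', ρ, hρK, hστ.trans hτρ, hfa⟩
  by_cases hs : (V σ).isSome = true
  · obtain ⟨τ, hτ⟩ := Option.isSome_iff_exists.mp hs
    have hvm : vminus V σ = σ := by rw [vminus, if_pos hs]
    have hvp : vplus V σ = τ := by rw [vplus, hτ]; rfl
    rw [hvm, hvp]
    by_cases hne : τ = σ
    · rw [hne]
    · exact core σ τ hσ hτ hne
  · have hVn : V σ = none := Option.not_isSome_iff_eq_none.mp hs
    have hvp : vplus V σ = σ := by rw [vplus, hVn]; rfl
    by_cases hex : ∃ τ, V τ = some σ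
    · have hvm : vminus V σ = hex.choose := by
        rw [vminus, if_neg hs, dif_pos hex]
      have hc : V hex.choose = some σ := hex.choose_spec
      have hcK : hex.choose ∈ K := by
        by_contra h
        rw [hV.1 _ h] at hc
        exact nomatch hc
      have hne : σ ≠ hex.choose := by
        intro h
        rw [← h] at hc
        rw [hc] at hVn
        exact nomatch hVn
      rw [hvm, hvp]
      exact core hex.choose σ hcK hc hne
    · have hvm : vminus V σ = σ := by
        rw [vminus, if_neg hs, dif_neg hex]
      rw [hvm, hvp]
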